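/- In the graph G_d, no vertex of the path P_d is contained in a triangle. -/

import Mathlib

open SimpleGraph

/-- Sorted list of the tuple set `S^d`: tuples with entries in {1,3} except
the last entry which is in {1,2,3,4}, of length between 1 and `d`,
listed in lexicographic order. -/
def Tl : ℕ → List (List ℕ)
  | 0 => []
  | k+1 => [[1]] ++ (Tl k).map (fun a => 1 :: a) ++ [[2], [3]]
            ++ (Tl k).map (fun a => 3 :: a) ++ [[4]]

/-- Strict lexicographic order on tuples (a proper prefix is smaller). -/
def lexLt (a b : List ℕ) : Prop := List.Lex (· < ·) a b

def lexLe (a b : List ℕ) : Prop := a = b ∨ lexLt a b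

/-- `v` is the successor of `u` in the lexicographic order on `S^d`. -/
def IsSucc (d : ℕ) (u v : List ℕ) : Prop :=
  v ∈ Tl d ∧ lexLt u v ∧ ∀ w ∈ Tl d, lexLt u w → lexLe v w

/-- The interval `[a,b]` in `S^d`. -/
def interval (d : ℕ) (a b : List ℕ) : Set (List ℕ) :=
  {c | c ∈ Tl d ∧ lexLe a c ∧ lexLe c b}

/-- `[a,b]` is a proper interval: no interior element has length `l(a)` or `l(b)`. -/
def ProperInterval (d : ℕ) (a b : List ℕ) : Prop :=
  a ∈ Tl d ∧ b ∈ Tl d ∧ lexLe a b ∧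
  ∀ c ∈ interval d a b, c ≠ a → c ≠ b →
    c.length ≠ a.length ∧ c.length ≠ b.length

/-- The set of left endpoints of flat steps of the interval `[a,b]`. -/
def flatSteps (d : ℕ) (a b : List ℕ) : Set (List ℕ) :=
  {c | c ∈ Tl d ∧ lexLe a c ∧ lexLt c b ∧ ∃ v, IsSucc d c v ∧ v.length = c.length}

/-- Vertices of `G_d`: elements of `S^d`, subdivision vertices, and centers. -/
inductive Vtx where
  | elt : List ℕ → Vtx
  | sub : ℕ → Fin 2 → Vtx
  | ctr : ℕ → Vtx
deriving DecidableEq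

/-- The path `P_d` as a list of vertices: the elements of `S^d` in order,
with two subdivision vertices between consecutive elements of equal length
and one otherwise. -/
def pathList (d : ℕ) : List Vtx :=
  (((Tl d).zipIdx).map Prod.swap).flatMap (fun p =>
    Vtx.elt p.2 :: (match (Tl d)[p.1 + 1]? with
      | none => []
      | some b =>
        if p.2.length = b.length then [Vtx.sub p.1 0, Vtx.sub p.1 1]
        else [Vtx.sub p.1 0]))

/-- `x` and `y` are consecutive in the list `l`. -/
def ChainAdj {α : Type} (l : List α) (x y : α) : Prop :=
  ∃ i, (l[i]? = some x ∧ l[i+1]? = some y) ∨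
       (l[i]? = some y ∧ l[i+1]? = some x)

/-- Adjacency from a center vertex. -/
def ctrAdj (d : ℕ) : Vtx → Vtx → Prop
  | Vtx.ctr k, Vtx.ctr m => k ≠ m ∧ 1 ≤ k ∧ k ≤ d ∧ 1 ≤ m ∧ m ≤ d
  | Vtx.ctr k, Vtx.elt a => 1 ≤ k ∧ k ≤ d ∧ a ∈ Tl d ∧ a.length = k
  | _, _ => False

/-- The vertex set of `G_d`. -/
def VSet (d : ℕ) : Finset Vtx :=
  (pathList d).toFinset ∪ (Finset.Icc 1 d).image Vtx.ctr

def GdAdj (d : ℕ) (x y : Vtx) : Prop :=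
  x ≠ y ∧ (ChainAdj (pathList d) x y ∨ ctrAdj d x y ∨ ctrAdj d y x)

/-- The graph `G_d`. -/
def Gd (d : ℕ) : SimpleGraph {x // x ∈ VSet d} where
  Adj x y := GdAdj d x.1 y.1
  symm := ⟨by
    rintro x y ⟨hne, h⟩
    refine ⟨hne.symm, ?_⟩
    rcases h with ⟨i, hi⟩ | h | h
    · exact Or.inl ⟨i, hi.symm⟩
    · exact Or.inr (Or.inr h)
    · exact Or.inr (Or.inl h)⟩
  loopless := ⟨fun x h => h.1 rfl⟩

/-- A rank decomposition of a graph `G`: a finite cubic tree together with a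
bijection from the vertices of `G` to the leaves of the tree. -/
structure RankDecomp {V : Type} [Fintype V] (G : SimpleGraph V) where
  t : Type
  fin : Fintype t
  tree : SimpleGraph t
  conn : tree.Connected
  acyc : tree.IsAcyclic
  two_le : 2 ≤ Nat.card t
  cubic : ∀ v : t, (tree.neighborSet v).ncard = 1 ∨ (tree.neighborSet v).ncard = 3
  leafEquiv : V ≃ {v : t // (tree.neighborSet v).ncard = 1}

/-- The set of vertices of `G` whose leaf lies on the side of `a` of
the edge `ab` of the decomposition tree. -/
def RankDecomp.side {V : Type} [Fintype V] {G : SimpleGraph V}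
    (D : RankDecomp G) (a b : D.t) : Set V :=
  {x | (D.tree.deleteEdges {s(a, b)}).Reachable (D.leafEquiv x).1 a}

/-- The cutrank function of `G`: the GF(2)-rank of the adjacency submatrix
between `X` and its complement. -/
noncomputable def cutRank {V : Type} [Fintype V] (G : SimpleGraph V) (X : Set V) : ℕ :=
  haveI : Fintype ↥X := Fintype.ofFinite _
  haveI : Fintype ↥(Xᶜ) := Fintype.ofFinite _
  haveI : DecidableRel G.Adj := Classical.decRel _
  Matrix.rank (Matrix.of (fun (x : ↥X) (y : ↥(Xᶜ)) =>
    if G.Adj x.1 y.1 then (1 : ZMod 2) else 0))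

/-- The decomposition `D` has width at most `k`. -/
def RankDecomp.WidthLE {V : Type} [Fintype V] {G : SimpleGraph V}
    (D : RankDecomp G) (k : ℕ) : Prop :=
  ∀ a b : D.t, D.tree.Adj a b → cutRank G (D.side a b) ≤ k

/-- The rank-width of `G`. -/
noncomputable def rankwidth {V : Type} [Fintype V] (G : SimpleGraph V) : ℕ :=
  sInf {k | ∃ D : RankDecomp G, D.WidthLE k}

/-- `l` is an induced path in `G`: its vertices are distinct and two of them
are adjacent in `G` iff they are consecutive on `l`. -/
def IsInducedPathList {V : Type} (G : SimpleGraph V) (l : List V) : Prop :=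
  l.Nodup ∧ ∀ x ∈ l, ∀ y ∈ l, (G.Adj x y ↔ ChainAdj l x y)

/-- The diamond: the complete graph on four vertices minus an edge. -/
def diamond : SimpleGraph (Fin 4) := (⊤ : SimpleGraph (Fin 4)).deleteEdges {s(2, 3)}

/-! Centres are adjacent only to elements of `S^d` and to one another, and no two elements of
`S^d` are consecutive on `P_d`, since every edge of `P'_d` is subdivided. Hence a triangle through
a vertex of `P_d` either lies on the path itself, which is impossible in a path, or contains a
centre `v_k` together with two elements of `S^d` adjacent on `P_d`, or contains two centres
adjacent to the same `a ∈ S^d`, which must both be `v_{l(a)}`. -/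

lemma nil_not_mem_Tl (d : ℕ) : [] ∉ Tl d := by
  cases d <;> simp [Tl]

lemma Tl_nodup (d : ℕ) : (Tl d).Nodup := by
  induction d with
  | zero => simp [Tl]
  | succ k ih =>
    have hdisjoint : ∀ a ∈ Tl k, ∀ b, ((∃ c ∈ Tl k, 3 :: c = b) ∨ b = [4]) → 1 :: a ≠ b := by
      rintro a - b (⟨c, -, rfl⟩ | rfl) <;> simp
    simpa [Tl, List.nodup_append, ih.map List.cons_injective, nil_not_mem_Tl] using hdisjoint

namespace ChainAdj

variable {α : Type} {l : List α} {x y z : α}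

lemma mem (h : ChainAdj l x y) : x ∈ l ∧ y ∈ l := by
  obtain ⟨i, ⟨hx, hy⟩ | ⟨hy, hx⟩⟩ := h <;>
    exact ⟨List.mem_of_getElem? hx, List.mem_of_getElem? hy⟩

lemma rel_or_rel {R : α → α → Prop} (hl : l.IsChain R) (h : ChainAdj l x y) : R x y ∨ R y x := by
  have step : ∀ {i u v}, l[i]? = some u → l[i + 1]? = some v → R u v := by
    intro i u v hu hv
    obtain ⟨hi, rfl⟩ := List.getElem?_eq_some_iff.mp hv
    obtain ⟨-, rfl⟩ := List.getElem?_eq_some_iff.mp hu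
    exact hl.getElem i hi
  obtain ⟨i, ⟨hx, hy⟩ | ⟨hy, hx⟩⟩ := h
  exacts [Or.inl (step hx hy), Or.inr (step hy hx)]

lemma not_triangle (hl : l.Nodup) (hxy : ChainAdj l x y) (hxz : ChainAdj l x z)
    (hyz : ChainAdj l y z) : False := by
  -- the positions of `y` and `z` would both be adjacent to that of `x` and to each other
  have positions : ∀ {u v}, ChainAdj l u v →
      ∃ p q, l[p]? = some u ∧ l[q]? = some v ∧ (q = p + 1 ∨ p = q + 1) := by
    rintro u v ⟨i, ⟨hu, hv⟩ | ⟨hv, hu⟩⟩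
    exacts [⟨i, i + 1, hu, hv, by omega⟩, ⟨i + 1, i, hu, hv, by omega⟩]
  have index_unique : ∀ {p q u}, l[p]? = some u → l[q]? = some u → p = q := fun hp hq =>
    (List.getElem?_inj (List.getElem?_eq_some_iff.mp hp).1 hl).mp (hp.trans hq.symm)
  obtain ⟨p₁, q₁, hx₁, hy₁, h₁⟩ := positions hxy
  obtain ⟨p₂, q₂, hx₂, hz₂, h₂⟩ := positions hxz
  obtain ⟨p₃, q₃, hy₃, hz₃, h₃⟩ := positions hyz
  have := index_unique hx₁ hx₂
  have := index_unique hy₁ hy₃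
  have := index_unique hz₂ hz₃
  omega

end ChainAdj

def subdivAfter (a : List ℕ) (i : ℕ) : Option (List ℕ) → List Vtx
  | none => []
  | some b => if a.length = b.length then [Vtx.sub i 0, Vtx.sub i 1] else [Vtx.sub i 0]

/-- `P_d` rebuilt by recursion: `pathFrom i l` is its part from the element of index `i` on,
`l` being the suffix of `S^d` starting there. -/
def pathFrom : ℕ → List (List ℕ) → List Vtx
  | _, [] => []
  | i, a :: t => Vtx.elt a :: (subdivAfter a i t.head? ++ pathFrom (i + 1) t)

lemma flatMap_zipIdx_eq_pathFrom (L : List (List ℕ)) :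
    ∀ {l : List (List ℕ)} {i : ℕ}, L.drop i = l →
      ((l.zipIdx i).map Prod.swap).flatMap
        (fun p => Vtx.elt p.2 :: subdivAfter p.2 p.1 L[p.1 + 1]?) = pathFrom i l
  | [], _, _ => rfl
  | a :: t, i, h => by
    have hnext : L[i + 1]? = t.head? := by
      rw [← List.getElem?_drop, h]; cases t <;> rfl
    have htail : L.drop (i + 1) = t := by rw [← List.drop_drop, h]; rfl
    simp only [List.zipIdx_cons, List.map_cons, List.flatMap_cons, Prod.swap_prod_mk, hnext,
      flatMap_zipIdx_eq_pathFrom L htail, pathFrom, List.cons_append]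

lemma pathList_eq_pathFrom (d : ℕ) : pathList d = pathFrom 0 (Tl d) :=
  flatMap_zipIdx_eq_pathFrom (Tl d) List.drop_zero

lemma mem_subdivAfter {a : List ℕ} {i : ℕ} {o : Option (List ℕ)} {x : Vtx}
    (hx : x ∈ subdivAfter a i o) : ∃ c, x = Vtx.sub i c := by
  cases o with
  | none => simp [subdivAfter] at hx
  | some b =>
    by_cases h : a.length = b.length <;> simp only [subdivAfter, h, if_true, if_false] at hx <;> aesop

lemma mem_pathFrom : ∀ {i : ℕ} {l : List (List ℕ)} {x : Vtx}, x ∈ pathFrom i l →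
    (∃ a ∈ l, x = Vtx.elt a) ∨ ∃ j c, i ≤ j ∧ x = Vtx.sub j c
  | _, [], _, hx => by simp [pathFrom] at hx
  | i, a :: t, x, hx => by
    simp only [pathFrom, List.mem_cons, List.mem_append] at hx
    rcases hx with rfl | hx | hx
    · exact Or.inl ⟨a, by simp, rfl⟩
    · obtain ⟨c, rfl⟩ := mem_subdivAfter hx
      exact Or.inr ⟨i, c, le_rfl, rfl⟩
    · rcases mem_pathFrom hx with ⟨b, hb, rfl⟩ | ⟨j, c, hj, rfl⟩
      · exact Or.inl ⟨b, List.mem_cons_of_mem a hb, rfl⟩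
      · exact Or.inr ⟨j, c, by omega, rfl⟩

lemma pathFrom_nodup : ∀ {i : ℕ} {l : List (List ℕ)}, l.Nodup → (pathFrom i l).Nodup
  | _, [], _ => List.nodup_nil
  | i, a :: t, h => by
    obtain ⟨ha, ht⟩ := List.nodup_cons.mp h
    refine List.nodup_cons.mpr ⟨?_, List.nodup_append.mpr ⟨?_, pathFrom_nodup ht, ?_⟩⟩
    · intro hmem
      rcases List.mem_append.mp hmem with hm | hm
      · obtain ⟨c, hc⟩ := mem_subdivAfter hm
        cases hc
      · rcases mem_pathFrom hm with ⟨b, hb, he⟩ | ⟨j, c, -, he⟩ <;> cases he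
        exact ha hb
    · rcases t.head? with _ | b
      · exact List.nodup_nil
      · by_cases h : a.length = b.length <;> simp [subdivAfter, h]
    · intro x hx y hy hxy
      obtain ⟨c, rfl⟩ := mem_subdivAfter hx
      rcases mem_pathFrom hy with ⟨b, -, he⟩ | ⟨j, c', hj, he⟩ <;> rw [← hxy] at he <;> cases he
      omega

def Vtx.IsElt : Vtx → Prop
  | .elt _ => True
  | _ => False

lemma pathFrom_isChain : ∀ (i : ℕ) (l : List (List ℕ)),
    (pathFrom i l).IsChain (fun u v => u.IsElt → ¬ v.IsElt)
  | _, [] => List.IsChain.nil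
  | _, [_] => List.IsChain.singleton _
  | i, a :: b :: t => by
    have ih := pathFrom_isChain (i + 1) (b :: t)
    by_cases h : a.length = b.length <;>
      simpa [pathFrom, subdivAfter, h, Vtx.IsElt] using ih

lemma pathList_nodup (d : ℕ) : (pathList d).Nodup := by
  rw [pathList_eq_pathFrom]
  exact pathFrom_nodup (Tl_nodup d)

lemma ctr_not_mem_pathList (d k : ℕ) : Vtx.ctr k ∉ pathList d := by
  rw [pathList_eq_pathFrom]
  intro h
  rcases mem_pathFrom h with ⟨a, -, he⟩ | ⟨j, c, -, he⟩ <;> cases he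

lemma not_chainAdj_elt_elt (d : ℕ) (a b : List ℕ) :
    ¬ ChainAdj (pathList d) (Vtx.elt a) (Vtx.elt b) := by
  intro h
  have hchain := pathList_eq_pathFrom d ▸ pathFrom_isChain 0 (Tl d)
  rcases h.rel_or_rel hchain with h | h <;> exact h trivial trivial

lemma mem_pathList_or_eq_ctr {d : ℕ} {v : Vtx} (hv : v ∈ VSet d) :
    v ∈ pathList d ∨ ∃ k, v = Vtx.ctr k := by
  simp only [VSet, Finset.mem_union, List.mem_toFinset, Finset.mem_image] at hv
  rcases hv with hv | ⟨k, -, rfl⟩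
  exacts [Or.inl hv, Or.inr ⟨k, rfl⟩]

lemma exists_eq_ctr_of_ctrAdj {d : ℕ} {u v : Vtx} (h : ctrAdj d u v) : ∃ k, u = Vtx.ctr k := by
  cases u with
  | ctr k => exact ⟨k, rfl⟩
  | _ => cases v <;> exact h.elim

namespace GdAdj

variable {d : ℕ} {u v : Vtx}

lemma chainAdj (hu : u ∈ pathList d) (hv : v ∈ pathList d) (h : GdAdj d u v) :
    ChainAdj (pathList d) u v := by
  rcases h.2 with h | h | h
  · exact h
  all_goals
    obtain ⟨k, rfl⟩ := exists_eq_ctr_of_ctrAdj h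
    exact absurd ‹_› (ctr_not_mem_pathList d k)

lemma eq_elt_of_ctr {k : ℕ} (hu : u ∈ pathList d) (h : GdAdj d u (Vtx.ctr k)) :
    ∃ a, u = Vtx.elt a ∧ a.length = k := by
  rcases h.2 with h | h | h
  · exact absurd h.mem.2 (ctr_not_mem_pathList d k)
  · obtain ⟨m, rfl⟩ := exists_eq_ctr_of_ctrAdj h
    exact absurd hu (ctr_not_mem_pathList d m)
  · cases u with
    | elt a => exact ⟨a, rfl, h.2.2.2⟩
    | sub => exact h.elim
    | ctr m => exact absurd hu (ctr_not_mem_pathList d m)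

end GdAdj

/-- In `G_d`, no vertex of the path `P_d` lies in a triangle. -/
theorem stmt11 (d : ℕ) (x : Vtx) (hx : x ∈ pathList d) (hx' : x ∈ VSet d) :
    ¬ ∃ y z : {v // v ∈ VSet d},
      (Gd d).Adj ⟨x, hx'⟩ y ∧ (Gd d).Adj ⟨x, hx'⟩ z ∧ (Gd d).Adj y z := by
  rintro ⟨⟨y, hy⟩, ⟨z, hz⟩, hxy, hxz, hyz⟩
  have hzy := hyz.symm
  rcases mem_pathList_or_eq_ctr hy with hy | ⟨k, rfl⟩ <;>
    rcases mem_pathList_or_eq_ctr hz with hz | ⟨m, rfl⟩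
  · exact (hxy.chainAdj hx hy).not_triangle (pathList_nodup d) (hxz.chainAdj hx hz)
      (hyz.chainAdj hy hz)
  · obtain ⟨a, rfl, -⟩ := hxz.eq_elt_of_ctr hx
    obtain ⟨b, rfl, -⟩ := hyz.eq_elt_of_ctr hy
    exact not_chainAdj_elt_elt d a b (hxy.chainAdj hx hy)
  · obtain ⟨a, rfl, -⟩ := hxy.eq_elt_of_ctr hx
    obtain ⟨b, rfl, -⟩ := hzy.eq_elt_of_ctr hz
    exact not_chainAdj_elt_elt d a b (hxz.chainAdj hx hz)
  · obtain ⟨a, rfl, rfl⟩ := hxy.eq_elt_of_ctr hx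
    obtain ⟨_, ha, rfl⟩ := hxz.eq_elt_of_ctr hx
    cases ha
    exact hyz.1 rfl
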